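/- Let w ≥ 1 and r > k ≥ 0 be integers. Then Σ_{i=0}^{r-1} ⌈w/2^{i+1}⌉ ≥ w·(1 - 2^{-(r-k)}) + k. -/

import Mathlib

/-!
On the first `r - k` terms bound `⌈w/2^(i+1)⌉` below by `w/2^(i+1)`, whose sum is the geometric
sum `w·(1 - 2^{-(r-k)})`; each of the remaining `k` terms is at least `1`, because `w ≥ 1`.
-/

open Finset

lemma sum_range_div_two_pow_succ {K : Type*} [Field K] [CharZero K] (x : K) (m : ℕ) :
    ∑ i ∈ range m, x / 2 ^ (i + 1) = x * (1 - (2 ^ m)⁻¹) := by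
  induction m with
  | zero => simp
  | succ n ih =>
    rw [sum_range_succ, ih]
    field_simp
    ring

lemma sum_range_add_le_sum_range_add {f g : ℕ → ℝ} (hgf : ∀ i, g i ≤ f i) (hf : ∀ i, 1 ≤ f i)
    (m k : ℕ) : ∑ i ∈ range m, g i + k ≤ ∑ i ∈ range (m + k), f i := by
  rw [sum_range_add]
  gcongr with i
  · exact hgf i
  · calc (k : ℝ) = ∑ _i ∈ range k, (1 : ℝ) := by simp
      _ ≤ ∑ i ∈ range k, f (m + i) := sum_le_sum fun i _ ↦ hf (m + i)

lemma Rat.cast_le_cast_ceil (q : ℚ) : (q : ℝ) ≤ (⌈q⌉ : ℝ) := by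
  exact_mod_cast Int.le_ceil q

/-- Splitting the Griesmer sum: for integers `w ≥ 1` and `r > k ≥ 0`,
`∑_{i=0}^{r-1} ⌈w/2^{i+1}⌉ ≥ w·(1 - 2^{-(r-k)}) + k`. -/
theorem stmt_18 (w r k : ℕ) (hw : 1 ≤ w) (hk : k < r) :
    (∑ i ∈ Finset.range r, (⌈(w : ℚ) / 2 ^ (i + 1)⌉ : ℝ)) ≥
      (w : ℝ) * (1 - 2 ^ (-((r : ℝ) - (k : ℝ)))) + (k : ℝ) := by
  obtain ⟨m, rfl⟩ : ∃ m, r = m + k := ⟨r - k, by omega⟩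
  have hexp : (2 : ℝ) ^ (-(((m + k : ℕ) : ℝ) - (k : ℝ))) = (2 ^ m)⁻¹ := by
    rw [Nat.cast_add, add_sub_cancel_right, Real.rpow_neg zero_le_two, Real.rpow_natCast]
  rw [ge_iff_le, hexp, ← sum_range_div_two_pow_succ]
  refine sum_range_add_le_sum_range_add (fun i ↦ ?_) (fun i ↦ ?_) m k
  · simpa using Rat.cast_le_cast_ceil ((w : ℚ) / 2 ^ (i + 1))
  · have : (1 : ℤ) ≤ ⌈(w : ℚ) / 2 ^ (i + 1)⌉ := Int.one_le_ceil_iff.mpr (by positivity)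
    exact_mod_cast this
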